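/- arXiv:1812.07755 — 2 statements merged into one kernel-verified Lean document; each statement's English description precedes it below -/
import Mathlib

section
/- Let $f \in \mathbb{R}[X]$ be a polynomial and let $m, d \in \mathbb{N}$ be such that $f(X-1) = (-1)^m f(-X)$ holds as an identity of polynomials. In the field $\mathbb{R}(t)$ of rational functions, define $c = \big(\tfrac{-t}{1-t^2}\big)^d \cdot f\big(\tfrac{t^2}{1-t^2}\big)$, where $f$ is evaluated at the rational function $t^2/(1-t^2)$. Let $\iota : \mathbb{R}(t) \to \mathbb{R}(t)$ be the $\mathbb{R}$-algebra field homomorphism determined by $t \mapsto t^{-1}$. Then $\iota(c) = (-1)^{d+m}\, c$; that is, $c$ satisfies the reciprocity $c(t^{-1}) = (-1)^{n} c(t)$ with $n = d + m$. -/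
/-!
Put `u = t²/(1-t²)` and `v = -t/(1-t²)`, so that `c = vᵈ f(u)`. Under `t ↦ t⁻¹` one computes
`u ↦ -u - 1` and `v ↦ -v`, while substituting `X ↦ -X` in the Dehn–Sommerville relation gives
`f(-X - 1) = (-1)ᵐ f(X)`. Hence `c ↦ (-v)ᵈ f(-u - 1) = (-1)ᵈ⁺ᵐ c`.
-/

open Polynomial

theorem Polynomial.aeval_neg_sub_one_of_comp_X_sub_one {R A : Type*} [CommRing R] [CommRing A]
    [Algebra R A] {f : R[X]} {m : ℕ} (hf : f.comp (X - 1) = (-1) ^ m * f.comp (-X)) (u : A) :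
    aeval (-u - 1) f = (-1) ^ m * aeval u f := by
  simpa [aeval_comp] using congrArg (aeval (-u)) hf

theorem RatFunc.one_sub_X_sq_ne_zero {K : Type*} [Field K] : (1 - X ^ 2 : RatFunc K) ≠ 0 := by
  have hp : (1 - Polynomial.X ^ 2 : K[X]) ≠ 0 := fun h => by
    simpa using congrArg (Polynomial.eval 0) h
  simpa [algebraMap_X] using algebraMap_ne_zero hp

section InvolutionIdentities

variable {F : Type*} [Field F] {x : F}

theorem inv_sq_div_one_sub_inv_sq (hx : x ≠ 0) (h : 1 - x ^ 2 ≠ 0) :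
    x⁻¹ ^ 2 / (1 - x⁻¹ ^ 2) = -(x ^ 2 / (1 - x ^ 2)) - 1 := by
  have h' : x ^ 2 - 1 ≠ 0 := fun h₀ => h (by linear_combination -h₀)
  field_simp
  ring

theorem neg_inv_div_one_sub_inv_sq (hx : x ≠ 0) (h : 1 - x ^ 2 ≠ 0) :
    -x⁻¹ / (1 - x⁻¹ ^ 2) = -(-x / (1 - x ^ 2)) := by
  have h' : x ^ 2 - 1 ≠ 0 := fun h₀ => h (by linear_combination -h₀)
  field_simp
  ring

end InvolutionIdentities

/-- **Reciprocity of the coefficients `c_{xy}`.**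
If a real polynomial `f` satisfies the Dehn–Sommerville-type relation
`f(X - 1) = (-1)^m f(-X)`, and `c = (-t/(1-t²))^d · f(t²/(1-t²)) ∈ ℝ(t)`, then under
the `ℝ`-algebra endomorphism `ι` of `ℝ(t)` determined by `t ↦ t⁻¹` one has
`ι(c) = (-1)^(d+m) · c`, i.e. `c(t⁻¹) = (-1)ⁿ c(t)` with `n = d + m`. -/
theorem reciprocity_of_coefficients
    (f : Polynomial ℝ) (m d : ℕ)
    (hf : f.comp (Polynomial.X - 1) = (-1 : Polynomial ℝ) ^ m * f.comp (-Polynomial.X))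
    (c : RatFunc ℝ)
    (hc : c = (-(RatFunc.X : RatFunc ℝ) / (1 - RatFunc.X ^ 2)) ^ d *
        Polynomial.aeval (((RatFunc.X : RatFunc ℝ) ^ 2) / (1 - RatFunc.X ^ 2)) f)
    (ι : RatFunc ℝ →ₐ[ℝ] RatFunc ℝ) (hι : ι RatFunc.X = (RatFunc.X : RatFunc ℝ)⁻¹) :
    ι c = (-1) ^ (d + m) * c := by
  have hX : (RatFunc.X : RatFunc ℝ) ≠ 0 := RatFunc.X_ne_zero
  have hX2 : (1 - RatFunc.X ^ 2 : RatFunc ℝ) ≠ 0 := RatFunc.one_sub_X_sq_ne_zero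
  have hu : ι (RatFunc.X ^ 2 / (1 - RatFunc.X ^ 2)) =
      -(RatFunc.X ^ 2 / (1 - RatFunc.X ^ 2)) - 1 := by
    simp only [map_div₀, map_sub, map_one, map_pow, hι, inv_sq_div_one_sub_inv_sq hX hX2]
  have hv : ι (-RatFunc.X / (1 - RatFunc.X ^ 2)) = -(-RatFunc.X / (1 - RatFunc.X ^ 2)) := by
    simp only [map_div₀, map_neg, map_sub, map_one, map_pow, hι, neg_inv_div_one_sub_inv_sq hX hX2]
  rw [hc, map_mul, map_pow, hv, ← aeval_algHom_apply, hu,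
    aeval_neg_sub_one_of_comp_X_sub_one hf, neg_pow, pow_add]
  ring
end

section
/- Let $S$ be a finite type and let $d : S \times S \to \mathbb{N}$ be a function satisfying $d(x,y) = 0$ if and only if $x = y$. Then for every $x \in S$ there exists a unique family of coefficients $(c_y)_{y \in S}$ in the field $\mathbb{R}(t)$ of rational functions such that for all $z \in S$: $\sum_{y \in S} c_y \, t^{d(y,z)} = 1$ if $z = x$ and $= 0$ otherwise. Equivalently, the characteristic function of $\{x\}$ is a unique $\mathbb{R}(t)$-linear combination of the functions $h_y : S \to \mathbb{R}(t)$, $h_y(z) = t^{d(y,z)}$. -/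
/-!
Put `M y z = t ^ d (y, z)`. The condition on `c` says `c ᵥ* M = Pi.single x 1`, so it suffices
that `M` is invertible over `ℝ(t)`. Its entries are polynomials in `t`, and setting `t = 0`
turns `M` into the identity matrix because `d` vanishes exactly on the diagonal; hence
`det M` is a polynomial with constant term `1`, in particular nonzero.
-/

open Polynomial Matrix

section

variable {S : Type*} [Fintype S] [DecidableEq S]

theorem Matrix.existsUnique_vecMul_eq {R : Type*} [CommRing R] {A : Matrix S S R}
    (hA : IsUnit A) (v : S → R) : ∃! c, c ᵥ* A = v :=
  (Function.Bijective.existsUnique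
    ⟨vecMul_injective_of_isUnit hA, vecMul_surjective_iff_isUnit.mpr hA⟩ v)

theorem eval_zero_det_X_pow {R : Type*} [CommRing R] {d : S × S → ℕ}
    (hd : ∀ x y : S, d (x, y) = 0 ↔ x = y) :
    (of fun y z => (X : R[X]) ^ d (y, z)).det.eval 0 = 1 := by
  have hmap : (of fun y z => (X : R[X]) ^ d (y, z)).map (eval 0) = 1 := by
    ext y z
    by_cases h : y = z
    · simp [h, (hd z z).mpr rfl, one_apply]
    · simp [h, zero_pow (mt (hd y z).mp h), one_apply]
  rw [← coe_evalRingHom, RingHom.map_det, RingHom.mapMatrix_apply, coe_evalRingHom, hmap,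
    det_one]

theorem isUnit_ratFunc_X_pow {K : Type*} [Field K] {d : S × S → ℕ}
    (hd : ∀ x y : S, d (x, y) = 0 ↔ x = y) :
    IsUnit (of fun y z => (RatFunc.X : RatFunc K) ^ d (y, z)) := by
  have hpoly : (of fun y z => (X : K[X]) ^ d (y, z)).det ≠ 0 := fun h => by
    simpa [h] using eval_zero_det_X_pow (R := K) hd
  have hmap : (of fun y z => (RatFunc.X : RatFunc K) ^ d (y, z)) =
      (of fun y z => (X : K[X]) ^ d (y, z)).map (algebraMap K[X] (RatFunc K)) := by
    ext y z
    simp [RatFunc.algebraMap_X]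
  rw [isUnit_iff_isUnit_det, hmap, ← RingHom.mapMatrix_apply, ← RingHom.map_det,
    isUnit_iff_ne_zero]
  exact (map_ne_zero_iff _ (RatFunc.algebraMap_injective K)).mpr hpoly

end

/-- **Key lemma (star case).**
Let `S` be a finite type and `d : S × S → ℕ` vanish exactly on the diagonal.  For every
`x ∈ S` the characteristic function of `{x}` is a *unique* `ℝ(t)`-linear combination of
the functions `h_y : z ↦ t^{d(y,z)}`: there is a unique family of coefficients
`(c_y)_{y ∈ S}` in `ℝ(t)` with `∑_y c_y t^{d(y,z)} = δ_{zx}` for all `z`. -/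
theorem char_fun_unique_combination
    (S : Type*) [Fintype S] [DecidableEq S]
    (d : S × S → ℕ) (hd : ∀ x y : S, d (x, y) = 0 ↔ x = y) (x : S) :
    ∃! c : S → RatFunc ℝ, ∀ z : S,
      ∑ y : S, c y * (RatFunc.X : RatFunc ℝ) ^ d (y, z) =
        if z = x then 1 else 0 := by
  have h := existsUnique_vecMul_eq (isUnit_ratFunc_X_pow (K := ℝ) hd) (Pi.single x 1)
  simpa only [funext_iff, vecMul, dotProduct, of_apply, Pi.single_apply] using h
end
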